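/- arXiv:1204.2848 — 3 statements merged into one kernel-verified Lean document; each statement's English description precedes it below -/
import Mathlib

section
/- Let ω : [0,∞) → [0,∞) be continuous and non-decreasing with ω(0) = 0, and suppose ω(t) ≥ k·t for all t ≥ 0, for some k > 0. Let W be an open set in ℝ^{N-1}, M > 0, and let g : closure(W) → ℝ satisfy |g(x̄) - g(ȳ)| ≤ M·ω(|x̄ - ȳ|) for all x̄, ȳ ∈ closure(W). Then for all x̄ ∈ closure(W) and x_N ∈ ℝ, |g(x̄) - x_N| ≤ (M + 1/k)·ω(d((x̄, x_N), Graph(g))), where Graph(g) = {(ȳ, g(ȳ)) : ȳ ∈ closure(W)} and d denotes Euclidean distance in ℝ^N. -/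
/-!
For any point `(ȳ, g ȳ)` of the graph, the triangle inequality through `g ȳ` splits `|g x̄ - x_N|`
into a horizontal part `M ω(|x̄ - ȳ|)` and a vertical part `|g ȳ - x_N| ≤ ω(·)/k`, both bounded in
terms of the distance from `(x̄, x_N)` to `(ȳ, g ȳ)`. Monotonicity and right continuity of `ω`
then pass the bound to the infimum over the graph.
-/

open Metric Set

lemma abs_sub_le_modulus_mul_dist_graph {α : Type*} [PseudoMetricSpace α] {p : ENNReal}
    [Fact (1 ≤ p)] {ω : ℝ → ℝ} {k M : ℝ} (hk : 0 < k) (hM : 0 ≤ M)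
    (hωm : MonotoneOn ω (Ici 0)) (hωk : ∀ t ≥ (0:ℝ), k * t ≤ ω t) {g : α → ℝ} {x y : α}
    (hg : |g x - g y| ≤ M * ω (dist x y)) (t : ℝ) :
    |g x - t| ≤ (M + 1 / k) * ω (dist (WithLp.toLp p (x, t)) (WithLp.toLp p (y, g y))) := by
  set D := dist (WithLp.toLp p (x, t)) (WithLp.toLp p (y, g y))
  have hD : 0 ≤ D := dist_nonneg
  have horiz : ω (dist x y) ≤ ω D :=
    hωm dist_nonneg hD (WithLp.dist_fst_le (WithLp.toLp p (x, t)) (WithLp.toLp p (y, g y)))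
  have vert : |g y - t| ≤ 1 / k * ω D := by
    have h : dist (g y) t ≤ D :=
      dist_comm t (g y) ▸ WithLp.dist_snd_le (WithLp.toLp p (x, t)) (WithLp.toLp p (y, g y))
    rw [Real.dist_eq] at h
    rw [one_div_mul_eq_div, le_div_iff₀' hk]
    exact (mul_le_mul_of_nonneg_left h hk.le).trans (hωk D hD)
  calc |g x - t| ≤ |g x - g y| + |g y - t| := abs_sub_le _ _ _
    _ ≤ M * ω D + 1 / k * ω D := add_le_add (hg.trans (mul_le_mul_of_nonneg_left horiz hM)) vert
    _ = (M + 1 / k) * ω D := by ring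

lemma le_comp_infDist_of_forall_le {α : Type*} [PseudoMetricSpace α] {F : ℝ → ℝ} {c : ℝ}
    {x : α} {s : Set α} (hs : s.Nonempty) (hF : MonotoneOn F (Ici 0))
    (hFc : ContinuousWithinAt F (Ioi (infDist x s)) (infDist x s))
    (h : ∀ y ∈ s, c ≤ F (dist x y)) : c ≤ F (infDist x s) := by
  refine ge_of_tendsto hFc (eventually_nhdsWithin_of_forall fun t ht => ?_)
  obtain ⟨y, hy, hyt⟩ := (infDist_lt_iff hs).1 ht
  exact (h y hy).trans (hF dist_nonneg (infDist_nonneg.trans ht.le) hyt.le)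

theorem vertical_dist_le_of_modulus_general {n : ℕ}
    (ω : ℝ → ℝ) (k M : ℝ) (hk : 0 < k) (hM : 0 < M)
    (hωc : ContinuousOn ω (Ici 0)) (hωm : MonotoneOn ω (Ici 0))
    (hωk : ∀ t ≥ (0:ℝ), k * t ≤ ω t)
    (W : Set (EuclideanSpace ℝ (Fin n)))
    (g : EuclideanSpace ℝ (Fin n) → ℝ)
    (hg : ∀ x ∈ closure W, ∀ y ∈ closure W, |g x - g y| ≤ M * ω (dist x y)) :
    ∀ x ∈ closure W, ∀ xN : ℝ,
      |g x - xN| ≤ (M + 1 / k) *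
        ω (infDist ((WithLp.equiv 2 (EuclideanSpace ℝ (Fin n) × ℝ)).symm (x, xN))
            ((fun y => (WithLp.equiv 2 (EuclideanSpace ℝ (Fin n) × ℝ)).symm (y, g y)) ''
              closure W)) := by
  intro x hx xN
  refine le_comp_infDist_of_forall_le ⟨_, mem_image_of_mem _ hx⟩
    (fun a ha b hb hab => mul_le_mul_of_nonneg_left (hωm ha hb hab) (by positivity))
    (((hωc _ infDist_nonneg).mono (Ioi_subset_Ici infDist_nonneg)).const_mul _) ?_
  rintro _ ⟨y, hy, rfl⟩
  exact abs_sub_le_modulus_mul_dist_graph hk hM.le hωm hωk (hg x hx y hy) xN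

/-- If `g` satisfies `|g(x̄) − g(ȳ)| ≤ M ω(|x̄ − ȳ|)` on `closure W` and `ω(t) ≥ kt`,
then the vertical deviation `|g(x̄) − x_N|` is controlled by
`(M + 1/k) ω(d((x̄,x_N), Graph(g)))`, the distance in `ℝ^N = ℝ^{N−1} × ℝ` (with the
Euclidean, i.e. `L²`, product metric) to the graph of `g`. -/
theorem vertical_dist_le_of_modulus {n : ℕ}
    (ω : ℝ → ℝ) (k M : ℝ) (hk : 0 < k) (hM : 0 < M)
    (hωc : ContinuousOn ω (Ici 0)) (hωm : MonotoneOn ω (Ici 0)) (hω0 : ω 0 = 0)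
    (hωk : ∀ t ≥ (0:ℝ), k * t ≤ ω t)
    (W : Set (EuclideanSpace ℝ (Fin n))) (hW : IsOpen W)
    (g : EuclideanSpace ℝ (Fin n) → ℝ)
    (hg : ∀ x ∈ closure W, ∀ y ∈ closure W, |g x - g y| ≤ M * ω (dist x y)) :
    ∀ x ∈ closure W, ∀ xN : ℝ,
      |g x - xN| ≤ (M + 1 / k) *
        ω (infDist ((WithLp.equiv 2 (EuclideanSpace ℝ (Fin n) × ℝ)).symm (x, xN))
            ((fun y => (WithLp.equiv 2 (EuclideanSpace ℝ (Fin n) × ℝ)).symm (y, g y)) ''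
              closure W)) :=
  vertical_dist_le_of_modulus_general ω k M hk hM hωc hωm hωk W g hg
end

section
/- In ℝ², let c > √3, 0 < ε < 1/√3, and let Ω₁ = {(x₁,x₂) : c|x₂| < x₁ < c} and Ω₂ = (Ω₁)_ε = {x ∈ Ω₁ : d(x,∂Ω₁) > ε}. Then sup_{x∈∂Ω₂} d(x,∂Ω₁) = ε while d^{HP}(∂Ω₁,∂Ω₂) = ε·√(c²+1); hence the lower Hausdorff–Pompeiu deviation of the boundaries equals ε, which is strictly smaller than the Hausdorff–Pompeiu distance ε√(c²+1) of the boundaries. -/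
/-!
For `x` in the closed truncated wedge `{c|x₂| + a ≤ x₁ ≤ b}` the distance to the boundary is
`min ((x₁ - c|x₂| - a) / √(c²+1)) (b - x₁)`: it is attained at the foot of the perpendicular on a
slanted side or at the point straight across on the side `x₁ = b`, and it is a lower bound because
`x ↦ x₁ - c|x₂|` is `√(c²+1)`-Lipschitz. Hence `Ω₂` is the truncated wedge with
`a = ε√(c²+1)`, `b = c - ε`, and every point of `∂Ω₂` is at distance exactly `ε` from `∂Ω₁`.
In the other direction, the apex `0` of `Ω₁` is at distance `ε√(c²+1)` from `Ω₂`, while the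
homothety carrying `Ω₁` onto `Ω₂` moves no point of the closed triangle farther than that; the
latter needs `c² ≥ 3`.
-/

open Metric Set

local notation "ℝ²" => EuclideanSpace ℝ (Fin 2)

namespace Wedge

def wedge (c a b : ℝ) : Set ℝ² := {x | c * |x 1| + a < x 0 ∧ x 0 < b}

def closedWedge (c a b : ℝ) : Set ℝ² := {x | c * |x 1| + a ≤ x 0 ∧ x 0 ≤ b}

variable {c a b : ℝ}

lemma isOpen_wedge : IsOpen (wedge c a b) :=
  (isOpen_lt (f := fun x : ℝ² => c * |x 1| + a) (by fun_prop) (by fun_prop)).inter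
    (isOpen_lt (f := fun x : ℝ² => x 0) (by fun_prop) continuous_const)

lemma isClosed_closedWedge : IsClosed (closedWedge c a b) :=
  (isClosed_le (f := fun x : ℝ² => c * |x 1| + a) (by fun_prop) (by fun_prop)).inter
    (isClosed_le (f := fun x : ℝ² => x 0) (by fun_prop) continuous_const)

lemma wedge_subset_closedWedge : wedge c a b ⊆ closedWedge c a b :=
  fun _ hx => ⟨hx.1.le, hx.2.le⟩

lemma openSegment_subset_wedge (hab : a < b) {p : ℝ²} (hp : p ∈ closedWedge c a b) :
    openSegment ℝ (!₂[(a + b) / 2, 0]) p ⊆ wedge c a b := by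
  rintro _ ⟨α, β, hα, hβ, hαβ, rfl⟩
  obtain ⟨hp₁, hp₂⟩ := hp
  have h₁ : |β * p 1| = β * |p 1| := by rw [abs_mul, abs_of_pos hβ]
  obtain rfl : α = 1 - β := by linarith
  refine ⟨?_, ?_⟩ <;> simp [h₁] <;>
    nlinarith [mul_le_mul_of_nonneg_left hp₁ hβ.le, mul_le_mul_of_nonneg_left hp₂ hβ.le]

lemma closure_wedge (hab : a < b) : closure (wedge c a b) = closedWedge c a b := by
  refine (closure_minimal wedge_subset_closedWedge isClosed_closedWedge).antisymm fun p hp => ?_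
  have h := closure_mono (openSegment_subset_wedge hab hp)
  rw [closure_openSegment] at h
  exact h (right_mem_segment ℝ _ _)

lemma frontier_wedge (hab : a < b) : frontier (wedge c a b) = closedWedge c a b \ wedge c a b := by
  rw [frontier, closure_wedge hab, isOpen_wedge.interior_eq]

lemma mem_frontier_wedge_right (hab : a < b) {v : ℝ} (hv : c * |v| + a ≤ b) :
    !₂[b, v] ∈ frontier (wedge c a b) := by
  rw [frontier_wedge hab]
  exact ⟨⟨hv, le_rfl⟩, fun h => lt_irrefl b h.2⟩

lemma mem_frontier_wedge_apex (hab : a < b) : !₂[a, 0] ∈ frontier (wedge c a b) := by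
  rw [frontier_wedge hab]
  exact ⟨⟨by simp, by simpa using hab.le⟩, fun h => absurd h.1 (by simp)⟩

lemma dist_eq_sqrt (x y : ℝ²) : dist x y = √((x 0 - y 0) ^ 2 + (x 1 - y 1) ^ 2) := by
  rw [EuclideanSpace.dist_eq, Fin.sum_univ_two]
  simp [Real.dist_eq, sq_abs]

lemma abs_sub_le_dist (x y : ℝ²) (i : Fin 2) : |x i - y i| ≤ dist x y :=
  PiLp.dist_apply_le x y i

lemma sub_sub_le_sqrt_mul_dist (hc : 0 ≤ c) (x y : ℝ²) :
    (x 0 - c * |x 1|) - (y 0 - c * |y 1|) ≤ √(c ^ 2 + 1) * dist x y := by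
  set u := x 0 - y 0
  set v := x 1 - y 1
  have hv : |y 1| - |x 1| ≤ |v| := (abs_sub_abs_le_abs_sub _ _).trans_eq (abs_sub_comm _ _)
  calc (x 0 - c * |x 1|) - (y 0 - c * |y 1|) ≤ |u| + c * |v| := by
        nlinarith [le_abs_self u, mul_le_mul_of_nonneg_left hv hc]
    _ ≤ √((c ^ 2 + 1) * (u ^ 2 + v ^ 2)) :=
        Real.le_sqrt_of_sq_le (by nlinarith [sq_nonneg (c * |u| - |v|), sq_abs u, sq_abs v])
    _ = √(c ^ 2 + 1) * dist x y := by rw [Real.sqrt_mul (by positivity), dist_eq_sqrt]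

lemma exists_abs_eq_abs_add (v : ℝ) {w : ℝ} (hw : 0 ≤ w) :
    ∃ v', |v'| = |v| + w ∧ (v' - v) ^ 2 = w ^ 2 := by
  rcases le_total 0 v with hv | hv
  · exact ⟨v + w, by rw [abs_of_nonneg hv, abs_of_nonneg (by positivity)], by ring⟩
  · exact ⟨v - w, by rw [abs_of_nonpos hv, abs_of_nonpos (by linarith)]; ring, by ring⟩

lemma exists_mem_frontier_wedge_dist_eq (hc : 0 ≤ c) (hab : a < b) {x : ℝ²}
    (hx : x ∈ closedWedge c a b) :
    ∃ p ∈ frontier (wedge c a b), dist x p = (x 0 - c * |x 1| - a) / √(c ^ 2 + 1) := by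
  obtain ⟨hx₁, hx₂⟩ := hx
  set t := (x 0 - c * |x 1| - a) / (c ^ 2 + 1)
  have ht : 0 ≤ t := div_nonneg (by linarith) (by positivity)
  have hct : (c ^ 2 + 1) * t = x 0 - c * |x 1| - a := mul_div_cancel₀ _ (by positivity)
  obtain ⟨v, hv, hvx⟩ := exists_abs_eq_abs_add (x 1) (mul_nonneg hc ht)
  have hon : c * |v| + a = x 0 - t := by rw [hv]; linear_combination hct
  refine ⟨!₂[x 0 - t, v], ?_, ?_⟩
  · rw [frontier_wedge hab]
    exact ⟨⟨by simp [hon], show x 0 - t ≤ b by linarith⟩, fun h => (h.1.trans_eq (by simp [hon])).false⟩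
  · have hs : √(c ^ 2 + 1) ^ 2 = c ^ 2 + 1 := Real.sq_sqrt (by positivity)
    have hsq : (x 0 - (x 0 - t)) ^ 2 + (x 1 - v) ^ 2 = (√(c ^ 2 + 1) * t) ^ 2 := by
      rw [mul_pow, hs]; linear_combination hvx
    rw [dist_eq_sqrt]
    change √((x 0 - (x 0 - t)) ^ 2 + (x 1 - v) ^ 2) = _
    rw [hsq, Real.sqrt_sq (by positivity), eq_div_iff (by positivity), mul_right_comm,
      Real.mul_self_sqrt (by positivity), hct]

theorem infDist_frontier_wedge (hc : 0 ≤ c) (hab : a < b) {x : ℝ²}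
    (hx : x ∈ closedWedge c a b) :
    infDist x (frontier (wedge c a b)) = min ((x 0 - c * |x 1| - a) / √(c ^ 2 + 1)) (b - x 0) := by
  have hwall : !₂[b, x 1] ∈ frontier (wedge c a b) :=
    mem_frontier_wedge_right hab (by linarith [hx.1, hx.2])
  refine le_antisymm (le_min ?_ ?_) ?_
  · obtain ⟨p, hp, hxp⟩ := exists_mem_frontier_wedge_dist_eq hc hab hx
    exact (infDist_le_dist_of_mem hp).trans_eq hxp
  · refine (infDist_le_dist_of_mem hwall).trans_eq ?_
    rw [dist_eq_sqrt]
    change √((x 0 - b) ^ 2 + (x 1 - x 1) ^ 2) = _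
    rw [sub_self, zero_pow two_ne_zero, add_zero, Real.sqrt_sq_eq_abs, abs_sub_comm,
      abs_of_nonneg (by linarith [hx.2])]
  · rw [le_infDist ⟨_, hwall⟩]
    intro y hy
    rw [frontier_wedge hab] at hy
    obtain ⟨-, hy⟩ := hy
    rcases le_or_gt b (y 0) with hyb | hyb
    · refine (min_le_right _ _).trans ?_
      rw [dist_comm]
      linarith [abs_sub_le_dist y x 0, le_abs_self (y 0 - x 0)]
    · have hy₁ : y 0 ≤ c * |y 1| + a := not_lt.1 fun h => hy ⟨h, hyb⟩
      refine (min_le_left _ _).trans ?_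
      rw [div_le_iff₀' (by positivity)]
      linarith [sub_sub_le_sqrt_mul_dist hc x y]

theorem sep_lt_infDist_frontier_wedge (hc : 0 ≤ c) (hab : a < b) {r : ℝ} (hr : 0 ≤ r) :
    {x ∈ wedge c a b | r < infDist x (frontier (wedge c a b))} =
      wedge c (a + r * √(c ^ 2 + 1)) (b - r) := by
  have hs : 0 < √(c ^ 2 + 1) := by positivity
  ext x
  rw [mem_sep_iff]
  constructor
  · rintro ⟨hx, hrx⟩
    rw [infDist_frontier_wedge hc hab (wedge_subset_closedWedge hx), lt_min_iff,
      lt_div_iff₀ hs] at hrx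
    exact ⟨by linarith, by linarith⟩
  · rintro ⟨hx₁, hx₂⟩
    have hx : x ∈ wedge c a b := ⟨by nlinarith, by linarith⟩
    refine ⟨hx, ?_⟩
    rw [infDist_frontier_wedge hc hab (wedge_subset_closedWedge hx), lt_min_iff, lt_div_iff₀ hs]
    exact ⟨by linarith, by linarith⟩

theorem infDist_frontier_wedge_of_mem_frontier_inner (hc : 0 ≤ c) {r : ℝ} (hr : 0 ≤ r)
    (h : a + r * √(c ^ 2 + 1) < b - r) {x : ℝ²}
    (hx : x ∈ frontier (wedge c (a + r * √(c ^ 2 + 1)) (b - r))) :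
    infDist x (frontier (wedge c a b)) = r := by
  have hs : 0 < √(c ^ 2 + 1) := by positivity
  have hrs : 0 ≤ r * √(c ^ 2 + 1) := by positivity
  rw [frontier_wedge h] at hx
  obtain ⟨⟨hx₁, hx₂⟩, hx⟩ := hx
  rw [infDist_frontier_wedge hc (by linarith) ⟨by linarith, by linarith⟩]
  refine le_antisymm ?_ (le_min ?_ (by linarith))
  · by_contra! hlt
    rw [lt_min_iff, lt_div_iff₀ hs] at hlt
    exact hx ⟨by linarith, by linarith⟩
  · rw [le_div_iff₀ hs]
    linarith

theorem iSup_infDist_frontier_wedge_inner (hc : 0 ≤ c) {r : ℝ} (hr : 0 ≤ r)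
    (h : a + r * √(c ^ 2 + 1) < b - r) :
    ⨆ x : frontier (wedge c (a + r * √(c ^ 2 + 1)) (b - r)),
      infDist (x : ℝ²) (frontier (wedge c a b)) = r := by
  have : Nonempty (frontier (wedge c (a + r * √(c ^ 2 + 1)) (b - r))) :=
    ⟨⟨_, mem_frontier_wedge_apex h⟩⟩
  exact (iSup_congr fun x => infDist_frontier_wedge_of_mem_frontier_inner hc hr h x.2).trans
    ciSup_const

def shiftScale (a l : ℝ) (x : ℝ²) : ℝ² := !₂[a + l * x 0, l * x 1]

lemma shiftScale_mem_wedge_iff {l a' b' : ℝ} (hl : 0 < l) {x : ℝ²} :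
    shiftScale a l x ∈ wedge c (a + l * a') (a + l * b') ↔ x ∈ wedge c a' b' := by
  change c * |l * x 1| + (a + l * a') < a + l * x 0 ∧ a + l * x 0 < a + l * b' ↔ _
  rw [abs_mul, abs_of_pos hl]
  constructor <;> rintro ⟨h₁, h₂⟩ <;> constructor <;> nlinarith

lemma shiftScale_mem_closedWedge_iff {l a' b' : ℝ} (hl : 0 < l) {x : ℝ²} :
    shiftScale a l x ∈ closedWedge c (a + l * a') (a + l * b') ↔ x ∈ closedWedge c a' b' := by
  change c * |l * x 1| + (a + l * a') ≤ a + l * x 0 ∧ a + l * x 0 ≤ a + l * b' ↔ _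
  rw [abs_mul, abs_of_pos hl]
  constructor <;> rintro ⟨h₁, h₂⟩ <;> constructor <;> nlinarith

lemma shiftScale_mem_frontier_wedge {l a' b' : ℝ} (hl : 0 < l) (hab : a' < b') {x : ℝ²}
    (hx : x ∈ frontier (wedge c a' b')) :
    shiftScale a l x ∈ frontier (wedge c (a + l * a') (a + l * b')) := by
  rw [frontier_wedge hab] at hx
  rw [frontier_wedge (by nlinarith)]
  exact ⟨(shiftScale_mem_closedWedge_iff hl).2 hx.1,
    fun h => hx.2 ((shiftScale_mem_wedge_iff hl).1 h)⟩

-- With `u = (1 - l) * x 0`, the claim reduces to `u √(c²+1) ≤ 2c² r`, which holds on the triangle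
-- as soon as `√(c²+1) ≤ c² - 1`, i.e. `c² ≥ 3`.
lemma dist_shiftScale_le (hc : √3 ≤ c) {r l : ℝ} (hr : 0 ≤ r)
    (hl : l * c = c - r - r * √(c ^ 2 + 1)) {x : ℝ²} (hx : x ∈ closedWedge c 0 c) :
    dist x (shiftScale (r * √(c ^ 2 + 1)) l x) ≤ r * √(c ^ 2 + 1) := by
  set s := √(c ^ 2 + 1)
  obtain ⟨hx₁, hx₂⟩ := hx
  have hc0 : 0 < c := (Real.sqrt_pos.2 (by norm_num)).trans_le hc
  have hc3 : 3 ≤ c ^ 2 := by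
    nlinarith [Real.sq_sqrt (show (0 : ℝ) ≤ 3 by norm_num), Real.sqrt_nonneg 3]
  have hs2 : s ^ 2 = c ^ 2 + 1 := Real.sq_sqrt (by positivity)
  have hs : 0 ≤ s := Real.sqrt_nonneg _
  have hsc : s ≤ c ^ 2 - 1 := by nlinarith
  have hx0 : 0 ≤ x 0 := by nlinarith [abs_nonneg (x 1)]
  have hlc : (1 - l) * c = r * (1 + s) := by linear_combination -hl
  have hl1 : 0 ≤ 1 - l := (mul_nonneg_iff_of_pos_right hc0).1 (by rw [hlc]; positivity)
  set u := (1 - l) * x 0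
  have hu : 0 ≤ u := mul_nonneg hl1 hx0
  have hus : u * s ≤ 2 * c ^ 2 * r :=
    calc u * s ≤ (1 - l) * c * s := by gcongr; exact mul_le_mul_of_nonneg_left hx₂ hl1
      _ = r * (s + s ^ 2) := by rw [hlc]; ring
      _ ≤ 2 * c ^ 2 * r := by rw [hs2]; nlinarith
  have hx₁sq : c ^ 2 * ((1 - l) * x 1) ^ 2 ≤ u ^ 2 := by
    have : (c * |x 1|) ^ 2 ≤ x 0 ^ 2 := pow_le_pow_left₀ (by positivity) (by linarith) 2
    rw [mul_pow, sq_abs] at this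
    nlinarith [sq_nonneg (1 - l)]
  have key : (u - r * s) ^ 2 + ((1 - l) * x 1) ^ 2 ≤ (r * s) ^ 2 := by
    have hu2 : u ^ 2 * s ^ 2 = u ^ 2 * (c ^ 2 + 1) := by rw [hs2]
    refine le_of_mul_le_mul_left ?_ (by positivity : 0 < c ^ 2)
    nlinarith [mul_nonneg (mul_nonneg hu hs) (sub_nonneg.2 hus)]
  rw [dist_eq_sqrt]
  calc √((x 0 - (r * s + l * x 0)) ^ 2 + (x 1 - l * x 1) ^ 2)
      = √((u - r * s) ^ 2 + ((1 - l) * x 1) ^ 2) := by congr 1; ring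
    _ ≤ √((r * s) ^ 2) := Real.sqrt_le_sqrt key
    _ = r * s := Real.sqrt_sq (by positivity)

theorem iSup_infDist_frontier_wedge_outer (hc : √3 ≤ c) {r : ℝ} (hr : 0 ≤ r)
    (h : r * √(c ^ 2 + 1) < c - r) :
    ⨆ x : frontier (wedge c 0 c),
      infDist (x : ℝ²) (frontier (wedge c (r * √(c ^ 2 + 1)) (c - r))) = r * √(c ^ 2 + 1) := by
  set s := √(c ^ 2 + 1)
  have hc0 : 0 < c := (Real.sqrt_pos.2 (by norm_num)).trans_le hc
  set l := (c - r - r * s) / c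
  have hl : l * c = c - r - r * s := div_mul_cancel₀ _ hc0.ne'
  have hl0 : 0 < l := div_pos (by linarith) hc0
  have hbound : ∀ x ∈ frontier (wedge c 0 c),
      infDist x (frontier (wedge c (r * s) (c - r))) ≤ r * s := by
    intro x hx
    have hψ := shiftScale_mem_frontier_wedge (a := r * s) hl0 hc0 hx
    rw [mul_zero, add_zero, hl, show r * s + (c - r - r * s) = c - r by ring] at hψ
    rw [frontier_wedge hc0] at hx
    exact (infDist_le_dist_of_mem hψ).trans (dist_shiftScale_le hc hr hl hx.1)
  have hapex : !₂[0, 0] ∈ frontier (wedge c 0 c) := mem_frontier_wedge_apex hc0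
  have : Nonempty (frontier (wedge c 0 c)) := ⟨⟨_, hapex⟩⟩
  refine le_antisymm (ciSup_le fun x => hbound x x.2)
    (le_ciSup_of_le ⟨r * s, forall_mem_range.2 fun x => hbound x x.2⟩ ⟨_, hapex⟩ ?_)
  rw [le_infDist ⟨_, mem_frontier_wedge_apex h⟩]
  intro y hy
  rw [frontier_wedge h] at hy
  have hy₀ : c * |y 1| + r * s ≤ y 0 := hy.1.1
  rw [dist_comm]
  have := abs_sub_le_dist y !₂[0, 0] 0
  change |y 0 - 0| ≤ _ at this
  nlinarith [le_abs_self (y 0 - 0), abs_nonneg (y 1)]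

end Wedge

lemma mul_one_add_sqrt_lt {c ε : ℝ} (hc : √3 < c) (hε0 : 0 < ε) (hε : ε < 1 / √3) :
    ε * (1 + √(c ^ 2 + 1)) < c := by
  have h3 : 0 < √3 := Real.sqrt_pos.2 (by norm_num)
  have hc0 : 0 < c := h3.trans hc
  have hc3 : 3 < c ^ 2 := by nlinarith [Real.sq_sqrt (show (0 : ℝ) ≤ 3 by norm_num)]
  have hs : √(c ^ 2 + 1) < c ^ 2 - 1 := by
    rw [Real.sqrt_lt' (by linarith)]
    nlinarith
  have hsum : 1 + √(c ^ 2 + 1) < √3 * c := by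
    refine lt_of_pow_lt_pow_left₀ 2 (by positivity) ?_
    rw [mul_pow, Real.sq_sqrt (by norm_num), add_sq, Real.sq_sqrt (by positivity)]
    nlinarith
  have hε3 : ε * √3 < 1 := (lt_div_iff₀ h3).1 hε
  calc ε * (1 + √(c ^ 2 + 1)) < ε * (√3 * c) := mul_lt_mul_of_pos_left hsum hε0
    _ = ε * √3 * c := by ring
    _ < c := by nlinarith

open Wedge

/-- The example of a sector `Ω₁ = {(x₁,x₂) : c|x₂| < x₁ < c}` in `ℝ²` with
`Ω₂ = (Ω₁)_ε`: the lower Hausdorff–Pompeiu deviation of the boundaries equals `ε`,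
the Hausdorff–Pompeiu distance of the boundaries equals `ε√(c²+1)`, and the former
is strictly smaller than the latter. -/
theorem sector_example (c ε : ℝ) (hc : Real.sqrt 3 < c)
    (hε0 : 0 < ε) (hε : ε < 1 / Real.sqrt 3) :
    ∀ Ω₁ Ω₂ : Set (EuclideanSpace ℝ (Fin 2)),
      Ω₁ = {x | c * |x 1| < x 0 ∧ x 0 < c} →
      Ω₂ = {x ∈ Ω₁ | ε < infDist x (frontier Ω₁)} →
      (⨆ x : frontier Ω₂, infDist (x : EuclideanSpace ℝ (Fin 2)) (frontier Ω₁)) = ε ∧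
      max (⨆ x : frontier Ω₁, infDist (x : EuclideanSpace ℝ (Fin 2)) (frontier Ω₂))
          (⨆ x : frontier Ω₂, infDist (x : EuclideanSpace ℝ (Fin 2)) (frontier Ω₁))
        = ε * Real.sqrt (c ^ 2 + 1) ∧
      min (⨆ x : frontier Ω₁, infDist (x : EuclideanSpace ℝ (Fin 2)) (frontier Ω₂))
          (⨆ x : frontier Ω₂, infDist (x : EuclideanSpace ℝ (Fin 2)) (frontier Ω₁))
        = ε ∧
      ε < ε * Real.sqrt (c ^ 2 + 1) := by
  intro Ω₁ Ω₂ hΩ₁ hΩ₂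
  have hc0 : 0 < c := (Real.sqrt_pos.2 (by norm_num)).trans hc
  have hεc : ε * √(c ^ 2 + 1) < c - ε := by linarith [mul_one_add_sqrt_lt hc hε0 hε]
  have h₁ : Ω₁ = wedge c 0 c := by simp only [hΩ₁, wedge, add_zero]
  have h₂ : Ω₂ = wedge c (ε * √(c ^ 2 + 1)) (c - ε) := by
    rw [hΩ₂, h₁, sep_lt_infDist_frontier_wedge hc0.le hc0 hε0.le, zero_add]
  have hinner := iSup_infDist_frontier_wedge_inner (a := 0) hc0.le hε0.le (by rwa [zero_add])
  rw [zero_add] at hinner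
  rw [h₂, h₁, hinner, iSup_infDist_frontier_wedge_outer hc.le hε0.le hεc]
  have hlt : ε < ε * √(c ^ 2 + 1) :=
    lt_mul_of_one_lt_right hε0 (by rw [Real.lt_sqrt zero_le_one]; nlinarith)
  exact ⟨rfl, max_eq_left hlt.le, min_eq_right hlt.le, hlt⟩
end

section
/- Fix an atlas 𝒜 in ℝ^N. The metric space (C(𝒜), d_𝒜) is complete. Moreover, for any continuous non-decreasing ω : [0,∞) → [0,∞) with ω(0) = 0 and ω(t) ≥ kt on [0,1] for some k > 0, and any M > 0, the subset C_M^{ω(·)}(𝒜) of open sets whose local boundary functions g_j satisfy |g_j(x̄) − g_j(ȳ)| ≤ M ω(|x̄ − ȳ|) for all x̄, ȳ, is compact in (C(𝒜), d_𝒜). -/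
/-!
In chart `j`, `Ω ∩ V_j` is the `r_j`-preimage of the subgraph of `g_j`, so `Ω` is determined by its
boundary functions: it is `domain g`. Restricting each `g_j` to the compact set `closure W_j` turns
`d_𝒜` into the sup metric of the complete space `∏_j C_b(closure W_j)`, so a Cauchy sequence
converges uniformly; in `C_M^ω(𝒜)` the common modulus `Mω` and the bounds `a_{Nj} ≤ g_j ≤ b_{Nj}`
make Arzelà–Ascoli applicable, and the modulus passes to the limit pointwise.

It remains to see that the limit `g` of the boundary functions of `Ω_m` represents `domain g`; for
this, pointwise convergence and continuity of `g` suffice. A point strictly below the graph of `g_k`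
lies in `Ω_m` for large `m`; this gives the covering condition and `x_N ≤ g_j(x̄)` on the open set
`domain g ∩ V_j`, where the inequality is then strict. Over a chart with `j < s'` the graph points
are limits of points below the graph but do not lie in `domain g`, so they are on its frontier.
-/

open Metric Set

/-- An atlas in `ℝ^{n+1}`: rotations `r_j` and cuboids `r_j(V_j) = Π_i (a_{ij}, b_{ij})`. -/
structure Atlas (n : ℕ) where
  s : ℕ
  s' : ℕ
  hs' : s' ≤ s
  ρ : ℝ
  ρpos : 0 < ρ
  r : Fin s → (EuclideanSpace ℝ (Fin (n+1)) ≃ₗᵢ[ℝ] EuclideanSpace ℝ (Fin (n+1)))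
  a : Fin s → Fin (n+1) → ℝ
  b : Fin s → Fin (n+1) → ℝ
  hab : ∀ j i, a j i < b j i

namespace Atlas

variable {n : ℕ} (A : Atlas n)

/-- The cuboid `V_j` (in the original coordinates). -/
def V (j : Fin A.s) : Set (EuclideanSpace ℝ (Fin (n+1))) :=
  (A.r j) ⁻¹' {x | ∀ i, A.a j i < x i ∧ x i < A.b j i}

/-- The base cuboid `W_j ⊂ ℝ^n`. -/
def W (j : Fin A.s) : Set (EuclideanSpace ℝ (Fin n)) :=
  {x | ∀ i : Fin n, A.a j i.castSucc < x i ∧ x i < A.b j i.castSucc}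

/-- First `n` coordinates of a point of `ℝ^{n+1}`. -/
noncomputable def bar {n : ℕ} (x : EuclideanSpace ℝ (Fin (n+1))) : EuclideanSpace ℝ (Fin n) :=
  (EuclideanSpace.equiv (Fin n) ℝ).symm (fun i => x i.castSucc)

/-- `Ω ∈ C(𝒜)` with local boundary functions `g`: `Ω` is open and nonempty, covered by
the sets `(V_j)_ρ`, in each chart `r_j(Ω ∩ V_j)` is the subgraph of the continuous
function `g j`, `V_j` meets `∂Ω` exactly for `j < s'`, and `a_{Nj}+ρ ≤ g_j ≤ b_{Nj}−ρ`
there (while `g_j = b_{Nj}` for `j ≥ s'`). -/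
def IsRep (Ω : Set (EuclideanSpace ℝ (Fin (n+1)))) (g : Fin A.s → EuclideanSpace ℝ (Fin n) → ℝ) : Prop :=
  IsOpen Ω ∧ Ω.Nonempty ∧ Bornology.IsBounded Ω ∧
  (∀ j, ContinuousOn (g j) (closure (A.W j))) ∧
  (Ω ⊆ ⋃ j, {x ∈ A.V j | A.ρ < infDist x (frontier (A.V j))}) ∧
  (∀ j, (A.r j) '' (Ω ∩ A.V j) =
    {x | bar x ∈ A.W j ∧ A.a j (Fin.last n) < x (Fin.last n) ∧
      x (Fin.last n) < g j (bar x)}) ∧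
  (∀ j : Fin A.s, (j : ℕ) < A.s' ↔ (A.V j ∩ frontier Ω).Nonempty) ∧
  (∀ j : Fin A.s, (j : ℕ) < A.s' → ∀ x ∈ closure (A.W j),
    A.a j (Fin.last n) + A.ρ ≤ g j x ∧ g j x ≤ A.b j (Fin.last n) - A.ρ) ∧
  (∀ j : Fin A.s, A.s' ≤ (j : ℕ) → ∀ x ∈ closure (A.W j), g j x = A.b j (Fin.last n))

/-- The atlas distance: maximum over charts of the sup-norm difference of the
local boundary functions. -/
noncomputable def adist (g₁ g₂ : Fin A.s → EuclideanSpace ℝ (Fin n) → ℝ) : ℝ :=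
  ⨆ j : Fin A.s, ⨆ x : closure (A.W j), |g₁ j x - g₂ j x|

end Atlas

open Atlas Filter

/-- `Ω ∈ C_M^{ω(·)}(𝒜)`: a representation whose boundary functions all satisfy
`|g_j(x̄) − g_j(ȳ)| ≤ M ω(|x̄ − ȳ|)`. -/
def Atlas.IsRepMod {n : ℕ} (A : Atlas n) (ω : ℝ → ℝ) (M : ℝ)
    (Ω : Set (EuclideanSpace ℝ (Fin (n+1))))
    (g : Fin A.s → EuclideanSpace ℝ (Fin n) → ℝ) : Prop :=
  A.IsRep Ω g ∧ ∀ j, ∀ x ∈ closure (A.W j), ∀ y ∈ closure (A.W j),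
    |g j x - g j y| ≤ M * ω (dist x y)

open Topology
open scoped BoundedContinuousFunction

local notation "ℝ^" n:max => EuclideanSpace ℝ (Fin n)

lemma dist_pi_eq_iSup {ι : Type*} [Fintype ι] {X : ι → Type*} [∀ i, PseudoMetricSpace (X i)]
    (f g : ∀ i, X i) : dist f g = ⨆ i, dist (f i) (g i) :=
  le_antisymm ((dist_pi_le_iff (Real.iSup_nonneg fun _ => dist_nonneg)).2 fun i =>
      le_ciSup (f := fun i => dist (f i) (g i)) (finite_range _).bddAbove i)
    (Real.iSup_le (dist_le_pi_dist f g) dist_nonneg)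

lemma BoundedContinuousFunction.isCompact_closure_of_modulus {X β : Type*} [PseudoMetricSpace X]
    [CompactSpace X] [MetricSpace β] {ω : ℝ → ℝ} (hωc : ContinuousWithinAt ω (Ici 0) 0)
    (hω0 : ω 0 = 0) (M : ℝ) {s : Set β} (hs : IsCompact s) :
    IsCompact (closure
      {f : X →ᵇ β | (∀ x y, dist (f x) (f y) ≤ M * ω (dist x y)) ∧ ∀ x, f x ∈ s}) := by
  refine arzela_ascoli s hs _ (fun f x hf => hf.2 x) <|
    Metric.equicontinuous_of_continuity_modulus (fun t => M * ω |t|) ?_ _ fun x y f => ?_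
  · have habs : Tendsto (fun t : ℝ => |t|) (𝓝 0) (𝓝[≥] 0) :=
      tendsto_nhdsWithin_iff.2 ⟨continuous_abs.tendsto' 0 0 abs_zero, .of_forall abs_nonneg⟩
    simpa [hω0] using (hωc.tendsto.comp habs).const_mul M
  · simpa [abs_of_nonneg dist_nonneg] using f.2.1 x y

lemma isOpen_cuboid {n : ℕ} (a b : Fin n → ℝ) :
    IsOpen {x : ℝ^n | ∀ i, a i < x i ∧ x i < b i} := by
  have : IsOpen (univ.pi fun i => Ioo (a i) (b i)) :=
    isOpen_set_pi finite_univ fun _ _ => isOpen_Ioo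
  simpa [Set.pi, Ioo] using this.preimage (PiLp.continuous_ofLp 2 _)

lemma isBounded_cuboid {n : ℕ} (a b : Fin n → ℝ) :
    Bornology.IsBounded {x : ℝ^n | ∀ i, a i < x i ∧ x i < b i} :=
  ((PiLp.antilipschitzWith_ofLp 2 _).isBounded_preimage (isBounded_Icc a b)).subset
    fun _ hx => ⟨fun i => (hx i).1.le, fun i => (hx i).2.le⟩

namespace Atlas

variable {n : ℕ}

lemma continuous_bar : Continuous (bar (n := n)) := by
  unfold bar; fun_prop

def snoc (x : ℝ^n) (t : ℝ) : ℝ^(n+1) :=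
  WithLp.toLp 2 (Fin.snoc x.ofLp t)

@[simp] lemma bar_snoc (x : ℝ^n) (t : ℝ) : bar (snoc x t) = x := by
  ext i; simp [bar, snoc]

@[simp] lemma snoc_last (x : ℝ^n) (t : ℝ) : snoc x t (Fin.last n) = t := by
  simp [snoc]

lemma continuous_snoc (x : ℝ^n) : Continuous (snoc x) := by
  unfold snoc; fun_prop

lemma bar_add_single_last (y : ℝ^(n+1)) (t : ℝ) :
    bar (y + EuclideanSpace.single (Fin.last n) t) = bar y := by
  ext i; simp [bar]

variable (A : Atlas n)

lemma W_nonempty (j : Fin A.s) : (A.W j).Nonempty :=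
  ⟨WithLp.toLp 2 fun i => (A.a j i.castSucc + A.b j i.castSucc) / 2, fun i => by
    have := A.hab j i.castSucc
    constructor <;> simp <;> linarith⟩

lemma isOpen_W (j : Fin A.s) : IsOpen (A.W j) :=
  isOpen_cuboid _ _

lemma isOpen_V (j : Fin A.s) : IsOpen (A.V j) :=
  (isOpen_cuboid _ _).preimage (A.r j).continuous

lemma isBounded_V (j : Fin A.s) : Bornology.IsBounded (A.V j) :=
  (A.r j).isometry.antilipschitz.isBounded_preimage (isBounded_cuboid _ _)

instance (j : Fin A.s) : CompactSpace (closure (A.W j)) :=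
  isCompact_iff_compactSpace.1 (isBounded_cuboid _ _).isCompact_closure

lemma mem_V_iff {j : Fin A.s} {x : ℝ^(n+1)} :
    x ∈ A.V j ↔ bar (A.r j x) ∈ A.W j ∧ A.a j (Fin.last n) < A.r j x (Fin.last n) ∧
      A.r j x (Fin.last n) < A.b j (Fin.last n) := by
  refine ⟨fun h => ⟨fun i => h i.castSucc, h (Fin.last n)⟩, fun ⟨hW, hlast⟩ i => ?_⟩
  exact Fin.lastCases hlast (fun i => hW i) i

def subgraph (g : Fin A.s → ℝ^n → ℝ) (j : Fin A.s) : Set (ℝ^(n+1)) :=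
  {x | bar x ∈ A.W j ∧ A.a j (Fin.last n) < x (Fin.last n) ∧ x (Fin.last n) < g j (bar x)}

def domain (g : Fin A.s → ℝ^n → ℝ) : Set (ℝ^(n+1)) :=
  ⋃ j, A.r j ⁻¹' A.subgraph g j

def BoundaryBounds (g : Fin A.s → ℝ^n → ℝ) : Prop :=
  (∀ j : Fin A.s, (j : ℕ) < A.s' → ∀ x ∈ closure (A.W j),
    A.a j (Fin.last n) + A.ρ ≤ g j x ∧ g j x ≤ A.b j (Fin.last n) - A.ρ) ∧
  (∀ j : Fin A.s, A.s' ≤ (j : ℕ) → ∀ x ∈ closure (A.W j), g j x = A.b j (Fin.last n))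

variable {A}

namespace BoundaryBounds

variable {g : Fin A.s → ℝ^n → ℝ} (hg : A.BoundaryBounds g) {j : Fin A.s} {x : ℝ^n}
include hg

lemma a_lt (hx : x ∈ closure (A.W j)) : A.a j (Fin.last n) < g j x := by
  rcases lt_or_ge (j : ℕ) A.s' with hj | hj
  · linarith [(hg.1 j hj x hx).1, A.ρpos]
  · rw [hg.2 j hj x hx]; exact A.hab j _

lemma le_b (hx : x ∈ closure (A.W j)) : g j x ≤ A.b j (Fin.last n) := by
  rcases lt_or_ge (j : ℕ) A.s' with hj | hj
  · linarith [(hg.1 j hj x hx).2, A.ρpos]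
  · exact (hg.2 j hj x hx).le

lemma lt_b (hj : (j : ℕ) < A.s') (hx : x ∈ closure (A.W j)) : g j x < A.b j (Fin.last n) := by
  linarith [(hg.1 j hj x hx).2, A.ρpos]

lemma preimage_subgraph_subset_V : A.r j ⁻¹' A.subgraph g j ⊆ A.V j := by
  rintro y ⟨hW, ha, hg'⟩ i
  exact Fin.lastCases ⟨ha, hg'.trans_le (hg.le_b (subset_closure hW))⟩ (fun i => hW i) i

end BoundaryBounds

lemma boundaryBounds_of_tendsto {G : ℕ → Fin A.s → ℝ^n → ℝ} {g : Fin A.s → ℝ^n → ℝ}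
    (hG : ∀ m, A.BoundaryBounds (G m))
    (hlim : ∀ j, ∀ x ∈ closure (A.W j), Tendsto (fun m => G m j x) atTop (𝓝 (g j x))) :
    A.BoundaryBounds g := by
  refine ⟨fun j hj x hx => ⟨?_, ?_⟩, fun j hj x hx => ?_⟩
  · exact ge_of_tendsto' (hlim j x hx) fun m => ((hG m).1 j hj x hx).1
  · exact le_of_tendsto' (hlim j x hx) fun m => ((hG m).1 j hj x hx).2
  · exact tendsto_nhds_unique (hlim j x hx)
      (tendsto_const_nhds.congr fun m => ((hG m).2 j hj x hx).symm)

namespace IsRep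

variable {Ω : Set (ℝ^(n+1))} {g : Fin A.s → ℝ^n → ℝ} (h : A.IsRep Ω g)
include h

lemma nonempty : Ω.Nonempty := h.2.1

lemma continuousOn (j : Fin A.s) : ContinuousOn (g j) (closure (A.W j)) := h.2.2.2.1 j

lemma subset_iUnion_V : Ω ⊆ ⋃ j, A.V j := fun _ hx =>
  let ⟨j, hj⟩ := mem_iUnion.1 (h.2.2.2.2.1 hx); mem_iUnion.2 ⟨j, hj.1⟩

lemma boundaryBounds : A.BoundaryBounds g := h.2.2.2.2.2.2.2

lemma inter_V_eq (j : Fin A.s) : Ω ∩ A.V j = A.r j ⁻¹' A.subgraph g j := by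
  rw [subgraph, ← h.2.2.2.2.2.1 j, (A.r j).injective.preimage_image]

end IsRep

lemma last_lt_of_forall_le_of_isOpen {U : Set (ℝ^(n+1))} (hU : IsOpen U)
    {f : ℝ^n → ℝ} (hle : ∀ y ∈ U, y (Fin.last n) ≤ f (bar y))
    {y : ℝ^(n+1)} (hy : y ∈ U) : y (Fin.last n) < f (bar y) := by
  obtain ⟨δ, hδ, hball⟩ := Metric.isOpen_iff.1 hU y hy
  have hmem : y + EuclideanSpace.single (Fin.last n) (δ / 2) ∈ U := hball <| by
    simp [abs_of_pos hδ, hδ]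
  have := hle _ hmem
  simp only [bar_add_single_last, PiLp.add_apply, PiLp.single_apply, if_true] at this
  linarith

variable (A)

lemma isOpen_subgraph {g : Fin A.s → ℝ^n → ℝ} {j : Fin A.s}
    (hg : ContinuousOn (g j) (A.W j)) : IsOpen (A.subgraph g j) := by
  have hW : IsOpen (bar ⁻¹' A.W j) := (A.isOpen_W j).preimage continuous_bar
  have hc : ContinuousOn (fun y => g j (bar y) - y (Fin.last n)) (bar ⁻¹' A.W j) :=
    (hg.comp continuous_bar.continuousOn (mapsTo_preimage _ _)).sub (by fun_prop)
  convert (hc.isOpen_inter_preimage hW (isOpen_Ioi (a := 0))).inter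
    (isOpen_lt continuous_const (continuous_apply (Fin.last n) |>.comp (PiLp.continuous_ofLp 2 _)))
    using 1
  ext y
  simp [subgraph, sub_pos]
  tauto

lemma isOpen_domain {g : Fin A.s → ℝ^n → ℝ}
    (hg : ∀ j, ContinuousOn (g j) (closure (A.W j))) : IsOpen (A.domain g) :=
  isOpen_iUnion fun j =>
    (A.isOpen_subgraph ((hg j).mono subset_closure)).preimage (A.r j).continuous

lemma symm_snoc_mem_domain {g : Fin A.s → ℝ^n → ℝ} {j : Fin A.s}
    {c : ℝ^n} {t : ℝ} (hc : c ∈ A.W j) (ha : A.a j (Fin.last n) < t)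
    (hg : t < g j c) : (A.r j).symm (snoc c t) ∈ A.domain g :=
  mem_iUnion.2 ⟨j, by simpa [subgraph] using ⟨hc, ha, hg⟩⟩

variable {A}

lemma lt_s'_iff_nonempty_V_inter_frontier {g : Fin A.s → ℝ^n → ℝ}
    (hg : ∀ j, ContinuousOn (g j) (closure (A.W j))) (hb : A.BoundaryBounds g) {j : Fin A.s}
    (hV : A.domain g ∩ A.V j = A.r j ⁻¹' A.subgraph g j) :
    (j : ℕ) < A.s' ↔ (A.V j ∩ frontier (A.domain g)).Nonempty := by
  rw [(A.isOpen_domain hg).frontier_eq]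
  constructor
  · intro hj
    obtain ⟨c, hc⟩ := A.W_nonempty j
    have ha := hb.a_lt (subset_closure hc)
    set p := (A.r j).symm (snoc c (g j c))
    have hpV : p ∈ A.V j :=
      A.mem_V_iff.2 (by simpa [p] using ⟨hc, ha, hb.lt_b hj (subset_closure hc)⟩)
    have hpD : p ∉ A.domain g := fun hp => by
      have : p ∈ A.domain g ∩ A.V j := ⟨hp, hpV⟩
      rw [hV] at this
      simpa [p] using this.2.2
    have hq : Tendsto (fun t => (A.r j).symm (snoc c (g j c - t))) (𝓝[>] 0) (𝓝 p) := by
      have : Continuous fun t => (A.r j).symm (snoc c (g j c - t)) :=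
        (A.r j).symm.continuous.comp ((continuous_snoc c).comp (continuous_sub_left _))
      simpa [p] using (this.tendsto 0).mono_left nhdsWithin_le_nhds
    have hpcl : p ∈ closure (A.domain g) := mem_closure_of_tendsto hq <| by
      filter_upwards [Ioo_mem_nhdsGT (sub_pos.2 ha)] with t ht
      exact A.symm_snoc_mem_domain hc (by linarith [ht.2]) (by linarith [ht.1])
    exact ⟨p, hpV, hpcl, hpD⟩
  · rintro ⟨x, hxV, -, hxD⟩
    by_contra hj
    obtain ⟨hW, ha, hlt⟩ := A.mem_V_iff.1 hxV
    exact hxD (mem_iUnion.2 ⟨j, hW, ha, by rwa [hb.2 j (not_lt.1 hj) _ (subset_closure hW)]⟩)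

section Limit

variable {Ω : ℕ → Set (ℝ^(n+1))} {G : ℕ → Fin A.s → ℝ^n → ℝ}
  {g : Fin A.s → ℝ^n → ℝ} (hrep : ∀ m, A.IsRep (Ω m) (G m))
  (hlim : ∀ j, ∀ x ∈ closure (A.W j), Tendsto (fun m => G m j x) atTop (𝓝 (g j x)))
include hrep hlim

lemma eventually_mem_of_mem_domain {x : ℝ^(n+1)} (hx : x ∈ A.domain g) :
    ∀ᶠ m in atTop, x ∈ Ω m := by
  obtain ⟨k, hW, ha, hlt⟩ := mem_iUnion.1 hx
  filter_upwards [(hlim k _ (subset_closure hW)).eventually_const_lt hlt] with m hm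
  have : x ∈ Ω m ∩ A.V k := (hrep m).inter_V_eq k ▸ ⟨hW, ha, hm⟩
  exact this.1

lemma domain_inter_V_eq_of_tendsto (hg : ∀ j, ContinuousOn (g j) (closure (A.W j)))
    (hb : A.BoundaryBounds g) (j : Fin A.s) :
    A.domain g ∩ A.V j = A.r j ⁻¹' A.subgraph g j := by
  refine Subset.antisymm (fun x hx => ?_) fun x hx =>
    ⟨mem_iUnion.2 ⟨j, hx⟩, hb.preimage_subgraph_subset_V hx⟩
  set U := (A.r j).symm ⁻¹' (A.domain g ∩ A.V j)
  have hU : IsOpen U :=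
    ((A.isOpen_domain hg).inter (A.isOpen_V j)).preimage (A.r j).symm.continuous
  have hle : ∀ y ∈ U, y (Fin.last n) ≤ g j (bar y) := by
    intro y ⟨hyD, hyV⟩
    have hW : bar y ∈ A.W j := by simpa using (A.mem_V_iff.1 hyV).1
    refine ge_of_tendsto (hlim j _ (subset_closure hW)) ?_
    filter_upwards [eventually_mem_of_mem_domain hrep hlim hyD] with m hm
    have : (A.r j).symm y ∈ Ω m ∩ A.V j := ⟨hm, hyV⟩
    rw [(hrep m).inter_V_eq j] at this
    simpa using this.2.2.le
  obtain ⟨hW, ha, -⟩ := A.mem_V_iff.1 hx.2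
  exact ⟨hW, ha, last_lt_of_forall_le_of_isOpen hU hle (by simpa [U] using hx)⟩

lemma isRep_domain_of_tendsto (hg : ∀ j, ContinuousOn (g j) (closure (A.W j))) :
    A.IsRep (A.domain g) g := by
  have hb : A.BoundaryBounds g :=
    boundaryBounds_of_tendsto (fun m => (hrep m).boundaryBounds) hlim
  have hV := domain_inter_V_eq_of_tendsto hrep hlim hg hb
  refine ⟨A.isOpen_domain hg, ?_, ?_, hg, ?_, fun j => ?_,
    fun j => lt_s'_iff_nonempty_V_inter_frontier hg hb (hV j), hb⟩
  · obtain ⟨x, hx⟩ := (hrep 0).nonempty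
    obtain ⟨j, -⟩ := mem_iUnion.1 ((hrep 0).subset_iUnion_V hx)
    obtain ⟨c, hc⟩ := A.W_nonempty j
    have ha := hb.a_lt (subset_closure hc)
    exact ⟨_, A.symm_snoc_mem_domain (t := (A.a j (Fin.last n) + g j c) / 2) hc
      (by linarith) (by linarith)⟩
  · refine (Bornology.isBounded_iUnion.2 A.isBounded_V).subset fun x hx => ?_
    obtain ⟨j, hj⟩ := mem_iUnion.1 hx
    exact mem_iUnion.2 ⟨j, hb.preimage_subgraph_subset_V hj⟩
  · intro x hx
    obtain ⟨m, hm⟩ := (eventually_mem_of_mem_domain hrep hlim hx).exists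
    exact (hrep m).2.2.2.2.1 hm
  · rw [hV j, (A.r j).surjective.image_preimage]
    rfl

end Limit

variable (A)

def toBCF (g : Fin A.s → ℝ^n → ℝ)
    (hg : ∀ j, ContinuousOn (g j) (closure (A.W j))) (j : Fin A.s) : closure (A.W j) →ᵇ ℝ :=
  .mkOfCompact ⟨(closure (A.W j)).domRestrict (g j), (hg j).domRestrict⟩

open Classical in
noncomputable def ofBCF (F : ∀ j, closure (A.W j) →ᵇ ℝ) (j : Fin A.s) (x : ℝ^n) : ℝ :=
  if hx : x ∈ closure (A.W j) then F j ⟨x, hx⟩ else 0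

variable {A}

lemma adist_eq_dist_toBCF {g₁ g₂ : Fin A.s → ℝ^n → ℝ}
    (hg₁ : ∀ j, ContinuousOn (g₁ j) (closure (A.W j)))
    (hg₂ : ∀ j, ContinuousOn (g₂ j) (closure (A.W j))) :
    A.adist g₁ g₂ = dist (A.toBCF g₁ hg₁) (A.toBCF g₂ hg₂) := by
  simp only [dist_pi_eq_iSup, BoundedContinuousFunction.dist_eq_iSup, Real.dist_eq]
  rfl

lemma ofBCF_of_mem (F : ∀ j, closure (A.W j) →ᵇ ℝ) {j : Fin A.s} {x : ℝ^n}
    (hx : x ∈ closure (A.W j)) : A.ofBCF F j x = F j ⟨x, hx⟩ :=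
  dif_pos hx

lemma continuousOn_ofBCF (F : ∀ j, closure (A.W j) →ᵇ ℝ) (j : Fin A.s) :
    ContinuousOn (A.ofBCF F j) (closure (A.W j)) := by
  rw [continuousOn_iff_continuous_domRestrict]
  convert (F j).continuous using 1
  funext x
  exact ofBCF_of_mem F x.2

lemma toBCF_ofBCF (F : ∀ j, closure (A.W j) →ᵇ ℝ) :
    A.toBCF (A.ofBCF F) (continuousOn_ofBCF F) = F := by
  ext j x
  exact ofBCF_of_mem F x.2

section Tendsto

variable {G : ℕ → Fin A.s → ℝ^n → ℝ}
  (hG : ∀ m j, ContinuousOn (G m j) (closure (A.W j))) {F : ∀ j, closure (A.W j) →ᵇ ℝ}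
  (hF : Tendsto (fun m => A.toBCF (G m) (hG m)) atTop (𝓝 F))
include hF

lemma tendsto_apply_of_tendsto_toBCF (j : Fin A.s) (x) (hx : x ∈ closure (A.W j)) :
    Tendsto (fun m => G m j x) atTop (𝓝 (A.ofBCF F j x)) := by
  rw [ofBCF_of_mem F hx]
  exact (continuous_eval_const _).tendsto _
    |>.comp (((continuous_apply j).tendsto F).comp hF)

lemma tendsto_adist_of_tendsto_toBCF :
    Tendsto (fun m => A.adist (G m) (A.ofBCF F)) atTop (𝓝 0) := by
  simp_rw [adist_eq_dist_toBCF (hG _) (continuousOn_ofBCF F), toBCF_ofBCF]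
  exact tendsto_iff_dist_tendsto_zero.1 hF

end Tendsto

variable {Ω : ℕ → Set (ℝ^(n+1))} {G : ℕ → Fin A.s → ℝ^n → ℝ}

theorem exists_isRep_tendsto_adist_of_cauchy (hrep : ∀ m, A.IsRep (Ω m) (G m))
    (hcau : ∀ ε > (0:ℝ), ∃ K, ∀ m l, K ≤ m → K ≤ l → A.adist (G m) (G l) < ε) :
    ∃ Ωl gl, A.IsRep Ωl gl ∧ Tendsto (fun m => A.adist (G m) gl) atTop (𝓝 0) := by
  have hG m := (hrep m).continuousOn
  have hcauchy : CauchySeq fun m => A.toBCF (G m) (hG m) := by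
    refine Metric.cauchySeq_iff.2 fun ε hε => ?_
    obtain ⟨K, hK⟩ := hcau ε hε
    exact ⟨K, fun m hm l hl => adist_eq_dist_toBCF (hG m) (hG l) ▸ hK m l hm hl⟩
  obtain ⟨F, hF⟩ := cauchySeq_tendsto_of_complete hcauchy
  exact ⟨_, _, isRep_domain_of_tendsto hrep (tendsto_apply_of_tendsto_toBCF hG hF)
    (continuousOn_ofBCF F), tendsto_adist_of_tendsto_toBCF hG hF⟩

theorem exists_subseq_isRepMod_tendsto_adist {ω : ℝ → ℝ} (hωc : ContinuousWithinAt ω (Ici 0) 0)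
    (hω0 : ω 0 = 0) {M : ℝ} (hrep : ∀ m, A.IsRepMod ω M (Ω m) (G m)) :
    ∃ φ : ℕ → ℕ, StrictMono φ ∧ ∃ Ωl gl, A.IsRepMod ω M Ωl gl ∧
      Tendsto (fun m => A.adist (G (φ m)) gl) atTop (𝓝 0) := by
  have hG m := (hrep m).1.continuousOn
  let T j := closure {f : closure (A.W j) →ᵇ ℝ | (∀ x y, dist (f x) (f y) ≤ M * ω (dist x y)) ∧
    ∀ x, f x ∈ Icc (A.a j (Fin.last n)) (A.b j (Fin.last n))}
  have hT : IsCompact (univ.pi T) := isCompact_univ_pi fun j =>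
    BoundedContinuousFunction.isCompact_closure_of_modulus hωc hω0 M isCompact_Icc
  have hmem m : A.toBCF (G m) (hG m) ∈ univ.pi T := fun j _ => subset_closure
    ⟨fun x y => (hrep m).2 j x x.2 y y.2, fun x => ⟨((hrep m).1.boundaryBounds.a_lt x.2).le,
      (hrep m).1.boundaryBounds.le_b x.2⟩⟩
  obtain ⟨F, -, φ, hφ, hF⟩ := hT.tendsto_subseq hmem
  have hlim := tendsto_apply_of_tendsto_toBCF (fun m => hG (φ m)) hF
  refine ⟨φ, hφ, _, _, ⟨isRep_domain_of_tendsto (fun m => (hrep (φ m)).1) hlim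
    (continuousOn_ofBCF F), fun j x hx y hy => ?_⟩,
    tendsto_adist_of_tendsto_toBCF (fun m => hG (φ m)) hF⟩
  exact le_of_tendsto' ((hlim j x hx).sub (hlim j y hy)).abs fun m => (hrep (φ m)).2 j x hx y hy

end Atlas

theorem atlasDist_complete_and_compact_general {n : ℕ} (A : Atlas n)
    (ω : ℝ → ℝ) (M : ℝ)
    (hωc : ContinuousOn ω (Set.Ici 0))
    (hω0 : ω 0 = 0) :
    (∀ (Ω : ℕ → Set (EuclideanSpace ℝ (Fin (n+1))))
      (G : ℕ → Fin A.s → EuclideanSpace ℝ (Fin n) → ℝ),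
      (∀ m, A.IsRep (Ω m) (G m)) →
      (∀ ε > (0:ℝ), ∃ K, ∀ m l, K ≤ m → K ≤ l → A.adist (G m) (G l) < ε) →
      ∃ Ωl gl, A.IsRep Ωl gl ∧
        Tendsto (fun m => A.adist (G m) gl) atTop (nhds 0)) ∧
    (∀ (Ω : ℕ → Set (EuclideanSpace ℝ (Fin (n+1))))
      (G : ℕ → Fin A.s → EuclideanSpace ℝ (Fin n) → ℝ),
      (∀ m, A.IsRepMod ω M (Ω m) (G m)) →
      ∃ φ : ℕ → ℕ, StrictMono φ ∧ ∃ Ωl gl, A.IsRepMod ω M Ωl gl ∧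
        Tendsto (fun m => A.adist (G (φ m)) gl) atTop (nhds 0)) :=
  ⟨fun _ _ => exists_isRep_tendsto_adist_of_cauchy,
    fun _ _ => exists_subseq_isRepMod_tendsto_adist (hωc 0 self_mem_Ici) hω0⟩

/-- `(C(𝒜), d_𝒜)` is complete, and for any admissible modulus `ω` and `M > 0`
the class `C_M^{ω(·)}(𝒜)` is (sequentially) compact in `(C(𝒜), d_𝒜)`. -/
theorem atlasDist_complete_and_compact {n : ℕ} (A : Atlas n)
    (ω : ℝ → ℝ) (k M : ℝ) (hk : 0 < k) (hM : 0 < M)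
    (hωc : ContinuousOn ω (Set.Ici 0)) (hωm : MonotoneOn ω (Set.Ici 0))
    (hω0 : ω 0 = 0) (hωk : ∀ t ∈ Set.Icc (0:ℝ) 1, k * t ≤ ω t) :
    (∀ (Ω : ℕ → Set (EuclideanSpace ℝ (Fin (n+1))))
      (G : ℕ → Fin A.s → EuclideanSpace ℝ (Fin n) → ℝ),
      (∀ m, A.IsRep (Ω m) (G m)) →
      (∀ ε > (0:ℝ), ∃ K, ∀ m l, K ≤ m → K ≤ l → A.adist (G m) (G l) < ε) →
      ∃ Ωl gl, A.IsRep Ωl gl ∧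
        Tendsto (fun m => A.adist (G m) gl) atTop (nhds 0)) ∧
    (∀ (Ω : ℕ → Set (EuclideanSpace ℝ (Fin (n+1))))
      (G : ℕ → Fin A.s → EuclideanSpace ℝ (Fin n) → ℝ),
      (∀ m, A.IsRepMod ω M (Ω m) (G m)) →
      ∃ φ : ℕ → ℕ, StrictMono φ ∧ ∃ Ωl gl, A.IsRepMod ω M Ωl gl ∧
        Tendsto (fun m => A.adist (G (φ m)) gl) atTop (nhds 0)) :=
  atlasDist_complete_and_compact_general A ω M hωc hω0
end
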